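/- arXiv:1408.5612 — 5 statements merged into one kernel-verified Lean document; each statement's English description precedes it below -/
import Mathlib

section
/- If G acts sharply 2-transitively on X with |X| ≥ 2, then all involutions in G are conjugate. -/
/-- If `G` acts sharply 2-transitively on `X` with `|X| ≥ 2`, then all
involutions of `G` are conjugate. -/
theorem stmt_2 {G X : Type*} [Group G] [MulAction G X]
    (h2trans : ∀ x y x' y' : X, x ≠ y → x' ≠ y' →
      ∃! g : G, g • x = x' ∧ g • y = y')
    (hX : ∃ x y : X, x ≠ y) :
    ∀ i j : G, i ≠ 1 → i ^ 2 = 1 → j ≠ 1 → j ^ 2 = 1 → IsConj i j := by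
  intro i j hi1 hi2 hj1 hj2
  have hmove : ∀ g : G, g ≠ 1 → ∃ x : X, g • x ≠ x := by
    intro g hg
    by_contra h
    push_neg at h
    obtain ⟨x, y, hxy⟩ := hX
    obtain ⟨u, _, huniq⟩ := h2trans x y x y hxy hxy
    exact hg ((huniq g ⟨h x, h y⟩).trans (huniq 1 ⟨one_smul G x, one_smul G y⟩).symm)
  obtain ⟨x, hx⟩ := hmove i hi1
  obtain ⟨y, hy⟩ := hmove j hj1
  have hix : i • (i • x) = x := by rw [smul_smul, ← sq, hi2, one_smul]
  have hjy : j • (j • y) = y := by rw [smul_smul, ← sq, hj2, one_smul]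
  obtain ⟨g, ⟨hg1, hg2⟩, -⟩ := h2trans x (i • x) y (j • y) (Ne.symm hx) (Ne.symm hy)
  obtain ⟨u, _, huniq⟩ := h2trans y (j • y) (j • y) y (Ne.symm hy) hy
  have hginv1 : g⁻¹ • y = x := by rw [← hg1, inv_smul_smul]
  have hginv2 : g⁻¹ • (j • y) = i • x := by rw [← hg2, inv_smul_smul]
  have h1 : (g * i * g⁻¹) • y = j • y := by
    rw [mul_smul, mul_smul, hginv1, hg2]
  have h2 : (g * i * g⁻¹) • (j • y) = y := by
    rw [mul_smul, mul_smul, hginv2, hix, hg1]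
  have key : g * i * g⁻¹ = j :=
    (huniq _ ⟨h1, h2⟩).trans (huniq j ⟨rfl, hjy⟩).symm
  exact isConj_iff.mpr ⟨g, key⟩
end

section
/- Suppose G acts sharply 2-transitively on X (|X| ≥ 2) and A is an abelian normal subgroup of G. If some nontrivial element of A fixes a point of X, then A contains a nontrivial element fixing two distinct points, hence (since nontrivial elements fix at most one point) A is trivial or every nontrivial element of A is fixed-point-free. -/
/-- Sharply 2-transitive action, `A` an abelian normal subgroup.  If some
nontrivial element of `A` fixes a point of `X`, then `A` contains a nontrivial
element fixing two distinct points; hence `A` is trivial or every nontrivial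
element of `A` is fixed-point-free. -/
theorem stmt_4 {G X : Type*} [Group G] [MulAction G X]
    (h2trans : ∀ x y x' y' : X, x ≠ y → x' ≠ y' →
      ∃! g : G, g • x = x' ∧ g • y = y')
    (hX : ∃ x y : X, x ≠ y)
    (A : Subgroup G) (hN : A.Normal)
    (hab : ∀ a ∈ A, ∀ b ∈ A, a * b = b * a) :
    ((∃ a ∈ A, a ≠ 1 ∧ ∃ x : X, a • x = x) →
      ∃ a ∈ A, a ≠ 1 ∧ ∃ x y : X, x ≠ y ∧ a • x = x ∧ a • y = y) ∧
    (A = ⊥ ∨ ∀ a ∈ A, a ≠ 1 → ∀ x : X, a • x ≠ x) := by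
  have part1 : (∃ a ∈ A, a ≠ 1 ∧ ∃ x : X, a • x = x) →
      ∃ a ∈ A, a ≠ 1 ∧ ∃ x y : X, x ≠ y ∧ a • x = x ∧ a • y = y := by
    rintro ⟨a, haA, ha1, x, hax⟩
    -- find y ≠ x
    obtain ⟨u, v, huv⟩ := hX
    obtain ⟨y, hyx⟩ : ∃ y : X, y ≠ x := by
      by_cases h : u = x
      · exact ⟨v, by rw [← h]; exact huv.symm⟩
      · exact ⟨u, h⟩
    -- g with g • x = y
    obtain ⟨g, ⟨hgx, -⟩, -⟩ := h2trans x y y x hyx.symm hyx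
    set b := g * a * g⁻¹ with hb
    have hbA : b ∈ A := hN.conj_mem a haA g
    have hb1 : b ≠ 1 := by
      intro h
      apply ha1
      have : a = g⁻¹ * (g * a * g⁻¹) * g := by group
      rw [← hb, h] at this; simpa using this
    have hby : b • y = y := by
      have : g⁻¹ • y = x := by rw [← hgx]; simp
      rw [hb]
      rw [mul_smul, mul_smul, this, hax, hgx]
    by_cases hbx : b • x = x
    · exact ⟨b, hbA, hb1, x, y, hyx.symm, hbx, hby⟩
    · refine ⟨a, haA, ha1, x, b • x, fun h => hbx h.symm, hax, ?_⟩
      have : a • b • x = b • a • x := by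
        rw [← mul_smul, hab a haA b hbA, mul_smul]
      rw [this, hax]
  refine ⟨part1, Or.inr ?_⟩
  intro a haA ha1 x hax
  obtain ⟨c, hcA, hc1, u, w, huw, hcu, hcw⟩ := part1 ⟨a, haA, ha1, x, hax⟩
  obtain ⟨g, -, huniq⟩ := h2trans u w u w huw huw
  exact hc1 ((huniq c ⟨hcu, hcw⟩).trans (huniq 1 ⟨one_smul _ _, one_smul _ _⟩).symm)
end

section
/- Any group G₀ embeds into a group H containing an involution t such that every involution of H is conjugate to t and t acts fixed-point-freely in the right regular action of H on itself. -/
namespace Stmt7Aux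
universe v


open Equiv
open scoped Classical




open Equiv

/-- cancellation: `a + a = b + b → a = b` for cardinals. -/
lemma card_add_self_inj {a b : Cardinal.{v}} (h : a + a = b + b) : a = b := by
  rcases le_or_gt Cardinal.aleph0 a with ha | ha
  · rcases le_or_gt Cardinal.aleph0 b with hb | hb
    · rwa [Cardinal.add_eq_self ha, Cardinal.add_eq_self hb] at h
    · exfalso
      have h2 : b + b < Cardinal.aleph0 := Cardinal.add_lt_aleph0 hb hb
      rw [← h, Cardinal.add_eq_self ha] at h2
      exact absurd ha (not_le.2 h2)
  · rcases le_or_gt Cardinal.aleph0 b with hb | hb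
    · exfalso
      have h2 : a + a < Cardinal.aleph0 := Cardinal.add_lt_aleph0 ha ha
      rw [h, Cardinal.add_eq_self hb] at h2
      exact absurd hb (not_le.2 h2)
    · obtain ⟨n, rfl⟩ := Cardinal.lt_aleph0.1 ha
      obtain ⟨m, rfl⟩ := Cardinal.lt_aleph0.1 hb
      have : ((n + n : ℕ) : Cardinal) = ((m + m : ℕ) : Cardinal) := by push_cast; exact h
      have h3 : n + n = m + m := Nat.cast_inj.1 this
      have : n = m := by omega
      exact congrArg _ this

lemma card_cancel_bool {A B : Type v} (h : Nonempty ((A × Bool) ≃ (B × Bool))) :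
    Nonempty (A ≃ B) := by
  have hA : (Cardinal.mk (A × Bool)) = Cardinal.mk A + Cardinal.mk A :=
    Cardinal.mk_congr ((Equiv.prodComm A Bool).trans (Equiv.boolProdEquivSum A))
  have hB : (Cardinal.mk (B × Bool)) = Cardinal.mk B + Cardinal.mk B :=
    Cardinal.mk_congr ((Equiv.prodComm B Bool).trans (Equiv.boolProdEquivSum B))
  have h' : Cardinal.mk A + Cardinal.mk A = Cardinal.mk B + Cardinal.mk B := by
    rw [← hA, ← hB]; exact Cardinal.mk_congr h.some
  exact Cardinal.eq.1 (card_add_self_inj h')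


/-- standard-form decomposition of a fixed-point-free involution. -/
noncomputable def pairing (u : Equiv.Perm Y) (hu : ∀ y, u (u y) = y)
    (hf : ∀ y, u y ≠ y) :
    Y ≃ ({y : Y // WellOrderingRel y (u y)} × Bool) where
  toFun y :=
    if h : WellOrderingRel y (u y) then (⟨y, h⟩, false)
    else (⟨u y, by
      have tri := trichotomous_of WellOrderingRel y (u y)
      rcases tri with h1 | h1 | h1
      · exact absurd h1 h
      · exact absurd h1.symm (hf y)
      · rw [hu]; exact h1⟩, true)
  invFun p := if p.2 then u p.1.1 else p.1.1
  left_inv y := by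
    by_cases h : WellOrderingRel y (u y)
    · simp [h]
    · simp [h, hu]
  right_inv p := by
    obtain ⟨⟨x, hx⟩, b⟩ := p
    cases b
    · simp [hx]
    · have hnot : ¬ WellOrderingRel (u x) x := fun hcon =>
        (IsWellFounded.wf (r := WellOrderingRel)).asymmetric _ _ hx hcon
      simp [hnot, hu, Subtype.ext_iff]
  
lemma pairing_apply_u (u : Equiv.Perm Y) (hu : ∀ y, u (u y) = y)
    (hf : ∀ y, u y ≠ y) (y : Y) :
    pairing u hu hf (u y) = ((pairing u hu hf y).1, !(pairing u hu hf y).2) := by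
  by_cases h : WellOrderingRel y (u y)
  · have hnot : ¬ WellOrderingRel (u y) y := fun hcon =>
      (IsWellFounded.wf (r := WellOrderingRel)).asymmetric _ _ h hcon
    simp [pairing, h, hnot, Subtype.ext_iff, hu]
  · have hyes : WellOrderingRel (u y) (u (u y)) := by
      have tri := trichotomous_of WellOrderingRel y (u y)
      rcases tri with h1 | h1 | h1
      · exact absurd h1 h
      · exact absurd h1.symm (hf y)
      · rw [hu]; exact h1
    simp [pairing, h, hyes]

/-- Any two fixed-point-free involutions of `Perm Y` are conjugate. -/
theorem fpf_isConj (u v : Equiv.Perm Y) (hu : ∀ y, u (u y) = y)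
    (huf : ∀ y, u y ≠ y) (hv : ∀ y, v (v y) = y) (hvf : ∀ y, v y ≠ y) :
    IsConj u v := by
  classical
  set eu := pairing u hu huf with heu
  set ev := pairing v hv hvf with hev
  obtain ⟨φ⟩ := card_cancel_bool ⟨(eu.symm.trans ev : _ ≃ _)⟩
  set c : Equiv.Perm Y := (eu.trans ((φ.prodCongr (Equiv.refl Bool)).trans ev.symm))
  have key : ∀ y, c (u y) = v (c y) := by
    intro y
    have h1 : eu (u y) = ((eu y).1, !(eu y).2) := pairing_apply_u u hu huf y
    have h2 : ∀ z : {y : Y // WellOrderingRel y (v y)} × Bool,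
        v (ev.symm z) = ev.symm (z.1, !z.2) := by
      intro z
      have := pairing_apply_u v hv hvf (ev.symm z)
      have hz : ev (ev.symm z) = z := ev.apply_symm_apply z
      rw [hz] at this
      -- this : ev (v (ev.symm z)) = (z.1, !z.2)
      have := congrArg ev.symm this
      rwa [ev.symm_apply_apply] at this
    show ev.symm ((φ.prodCongr (Equiv.refl Bool)) (eu (u y)))
        = v (ev.symm ((φ.prodCongr (Equiv.refl Bool)) (eu y)))
    rw [h1]
    rw [h2 ((φ.prodCongr (Equiv.refl Bool)) (eu y))]
    rfl
  rw [isConj_iff]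
  refine ⟨c, ?_⟩
  have hmul : c * u = v * c := by
    ext y
    simp only [Equiv.Perm.mul_apply]
    exact key y
  calc c * u * c⁻¹ = v * c * c⁻¹ := by rw [hmul]
    _ = v := by group



universe u

variable (G₀ : Type u) [Group G₀]

/-- The tower of iterated permutation groups. -/
def XX : ℕ → Type u
  | 0 => G₀
  | (n+1) => Equiv.Perm (XX n × Bool)

instance instGroupXX : ∀ n, Group (XX G₀ n)
  | 0 => inferInstanceAs (Group G₀)
  | (n+1) => inferInstanceAs (Group (Equiv.Perm (XX G₀ n × Bool)))

/-- view an element of `XX (n+1)` as a permutation -/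
def asPerm {n : ℕ} (g : XX G₀ (n+1)) : Equiv.Perm (XX G₀ n × Bool) := g

/-- One step of the tower: left-regular action on `XX n × Bool`. -/
def step (n : ℕ) : XX G₀ n →* XX G₀ (n+1) where
  toFun g := (Equiv.prodCongr (Equiv.mulLeft g) (Equiv.refl Bool) :
      Equiv.Perm (XX G₀ n × Bool))
  map_one' := by
    apply Equiv.ext
    rintro ⟨x, b⟩
    simp
    rfl
  map_mul' g h := by
    apply Equiv.ext
    rintro ⟨x, b⟩
    show ((g * h) * x, b) = _
    show _ = (g * (h * x), b)
    rw [mul_assoc]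

lemma step_apply (n : ℕ) (g : XX G₀ n) (p : XX G₀ n × Bool) :
    asPerm G₀ (step G₀ n g) p = (g * p.1, p.2) := rfl

lemma step_inj (n : ℕ) : Function.Injective (step G₀ n) := by
  intro g h e
  have e2 := congrArg (fun (q : Equiv.Perm (XX G₀ n × Bool)) =>
    q ((1 : XX G₀ n), false)) (congrArg (asPerm G₀) e)
  simp only [step_apply] at e2
  simpa using congrArg Prod.fst e2

def tr {n m : ℕ} (h : n ≤ m) : XX G₀ n →* XX G₀ m :=
  Nat.leRecOn (C := fun m => XX G₀ n →* XX G₀ m) h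
    (fun {k} f => (step G₀ k).comp f) (MonoidHom.id _)

lemma tr_self {n : ℕ} (h : n ≤ n) (g : XX G₀ n) : tr G₀ h g = g := by
  have e : tr G₀ h = Nat.leRecOn (C := fun m => XX G₀ n →* XX G₀ m) h
      (fun {k} f => (step G₀ k).comp f) (MonoidHom.id (XX G₀ n)) := rfl
  rw [e, Nat.leRecOn_self]
  rfl

lemma tr_succ {n m : ℕ} (h : n ≤ m + 1) (h' : n ≤ m) (g : XX G₀ n) :
    tr G₀ h g = step G₀ m (tr G₀ h' g) := by
  have e : tr G₀ h = Nat.leRecOn (C := fun m => XX G₀ n →* XX G₀ m) h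
      (fun {k} f => (step G₀ k).comp f) (MonoidHom.id (XX G₀ n)) := rfl
  rw [e, Nat.leRecOn_succ h']
  rfl

lemma tr_succ_self {n : ℕ} (h : n ≤ n + 1) (g : XX G₀ n) :
    tr G₀ h g = step G₀ n g := by
  rw [tr_succ G₀ h (le_refl n), tr_self]

lemma tr_tr {n m k : ℕ} (h1 : n ≤ m) (h2 : m ≤ k) (h3 : n ≤ k) (g : XX G₀ n) :
    tr G₀ h2 (tr G₀ h1 g) = tr G₀ h3 g := by
  induction k, h2 using Nat.le_induction with
  | base => rw [tr_self]
  | succ k hk ih =>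
      rw [tr_succ G₀ _ hk, tr_succ G₀ h3 (h1.trans hk), ih (h1.trans hk)]

lemma tr_inj {n m : ℕ} (h : n ≤ m) : Function.Injective (tr G₀ h) := by
  induction m, h using Nat.le_induction with
  | base =>
      intro x y e
      rwa [tr_self, tr_self] at e
  | succ k hk ih =>
      intro x y e
      rw [tr_succ G₀ _ hk, tr_succ G₀ _ hk] at e
      exact ih (step_inj G₀ k e)

/-- The direct limit construction. -/
instance setoidH : Setoid ((n : ℕ) × XX G₀ n) where
  r a b := ∃ (k : ℕ) (h1 : a.1 ≤ k) (h2 : b.1 ≤ k), tr G₀ h1 a.2 = tr G₀ h2 b.2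
  iseqv := by
    constructor
    · exact fun a => ⟨a.1, le_refl _, le_refl _, rfl⟩
    · rintro a b ⟨k, h1, h2, e⟩
      exact ⟨k, h2, h1, e.symm⟩
    · rintro a b c ⟨k, h1, h2, e⟩ ⟨k', h1', h2', e'⟩
      refine ⟨max k k', h1.trans (le_max_left _ _), h2'.trans (le_max_right _ _), ?_⟩
      have E := congrArg (tr G₀ (le_max_left k k')) e
      have E' := congrArg (tr G₀ (le_max_right k k')) e'
      rw [tr_tr G₀ h1 (le_max_left k k') (h1.trans (le_max_left _ _)),
          tr_tr G₀ h2 (le_max_left k k') (h2.trans (le_max_left _ _))] at E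
      rw [tr_tr G₀ h1' (le_max_right k k') (h1'.trans (le_max_right _ _)),
          tr_tr G₀ h2' (le_max_right k k') (h2'.trans (le_max_right _ _))] at E'
      rw [E]
      rw [show (h2.trans (le_max_left k k')) = (h1'.trans (le_max_right k k')) from rfl] at E ⊢
      exact E'

def H := Quotient (setoidH G₀)

def mk (n : ℕ) (g : XX G₀ n) : H G₀ := Quotient.mk _ ⟨n, g⟩

lemma mk_tr {n m : ℕ} (h : n ≤ m) (g : XX G₀ n) :
    mk G₀ m (tr G₀ h g) = mk G₀ n g :=
  Quotient.sound ⟨m, le_refl m, h, by rw [tr_self]⟩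

lemma rel_at {a b : (n : ℕ) × XX G₀ n} (hab : (setoidH G₀).r a b)
    {K : ℕ} (hA : a.1 ≤ K) (hB : b.1 ≤ K) : tr G₀ hA a.2 = tr G₀ hB b.2 := by
  obtain ⟨k, h1, h2, e⟩ := hab
  apply tr_inj G₀ (le_max_left K k)
  have E := congrArg (tr G₀ (le_max_right K k)) e
  rw [tr_tr G₀ h1 (le_max_right K k) (h1.trans (le_max_right _ _)),
      tr_tr G₀ h2 (le_max_right K k) (h2.trans (le_max_right _ _))] at E
  rw [tr_tr G₀ hA (le_max_left K k) (hA.trans (le_max_left _ _)),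
      tr_tr G₀ hB (le_max_left K k) (hB.trans (le_max_left _ _))]
  rw [show (hA.trans (le_max_left K k)) = (h1.trans (le_max_right K k)) from rfl,
      show (hB.trans (le_max_left K k)) = (h2.trans (le_max_right K k)) from rfl]
  exact E

lemma mk_inj {n : ℕ} : Function.Injective (mk G₀ n) := by
  intro g h e
  have h2 := Quotient.exact e
  have e2 := rel_at G₀ h2 (le_refl n) (le_refl n)
  rwa [tr_self, tr_self] at e2

instance : Mul (H G₀) :=
  ⟨Quotient.map₂
    (fun a b => ⟨max a.1 b.1,
      tr G₀ (le_max_left _ _) a.2 * tr G₀ (le_max_right _ _) b.2⟩)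
    (by
      rintro a a' ha b b' hb
      refine ⟨max (max a.1 b.1) (max a'.1 b'.1), le_max_left _ _, le_max_right _ _, ?_⟩
      rw [map_mul, map_mul]
      rw [tr_tr G₀ (le_max_left a.1 b.1) (le_max_left _ _)
            ((le_max_left a.1 b.1).trans (le_max_left _ _)),
          tr_tr G₀ (le_max_right a.1 b.1) (le_max_left _ _)
            ((le_max_right a.1 b.1).trans (le_max_left _ _)),
          tr_tr G₀ (le_max_left a'.1 b'.1) (le_max_right _ _)
            ((le_max_left a'.1 b'.1).trans (le_max_right _ _)),
          tr_tr G₀ (le_max_right a'.1 b'.1) (le_max_right _ _)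
            ((le_max_right a'.1 b'.1).trans (le_max_right _ _))]
      rw [rel_at G₀ ha ((le_max_left a.1 b.1).trans (le_max_left _ _))
            ((le_max_left a'.1 b'.1).trans (le_max_right _ _)),
          rel_at G₀ hb ((le_max_right a.1 b.1).trans (le_max_left _ _))
            ((le_max_right a'.1 b'.1).trans (le_max_right _ _))])⟩

instance : One (H G₀) := ⟨mk G₀ 0 1⟩

instance : Inv (H G₀) :=
  ⟨Quotient.map (fun a => ⟨a.1, a.2⁻¹⟩)
    (by
      rintro a b ⟨k, h1, h2, e⟩
      exact ⟨k, h1, h2, by rw [map_inv, map_inv, e]⟩)⟩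

lemma mul_def (n m : ℕ) (g : XX G₀ n) (h : XX G₀ m) :
    mk G₀ n g * mk G₀ m h
      = mk G₀ (max n m) (tr G₀ (le_max_left _ _) g * tr G₀ (le_max_right _ _) h) :=
  rfl

lemma inv_def (n : ℕ) (g : XX G₀ n) : (mk G₀ n g)⁻¹ = mk G₀ n g⁻¹ := rfl

lemma one_def : (1 : H G₀) = mk G₀ 0 1 := rfl

lemma mk_one (n : ℕ) : mk G₀ n 1 = (1 : H G₀) := by
  rw [one_def, ← mk_tr G₀ (Nat.zero_le n) (1 : XX G₀ 0), map_one]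

lemma mk_mul (n : ℕ) (g h : XX G₀ n) :
    mk G₀ n g * mk G₀ n h = mk G₀ n (g * h) := by
  rw [mul_def,
    show (le_max_right n n) = (le_max_left n n) from rfl,
    ← map_mul, mk_tr]

lemma exists_rep (x : H G₀) : ∃ n g, x = mk G₀ n g :=
  Quotient.inductionOn x fun a => ⟨a.1, a.2, rfl⟩

instance : Group (H G₀) where
  mul_assoc x y z := by
    obtain ⟨n, g, rfl⟩ := exists_rep G₀ x
    obtain ⟨m, h, rfl⟩ := exists_rep G₀ y
    obtain ⟨k, i, rfl⟩ := exists_rep G₀ z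
    rw [← mk_tr G₀ (le_max_left n (max m k)) g,
        ← mk_tr G₀ ((le_max_left m k).trans (le_max_right n (max m k))) h,
        ← mk_tr G₀ ((le_max_right m k).trans (le_max_right n (max m k))) i]
    rw [mk_mul, mk_mul, mk_mul, mk_mul, mul_assoc]
  one_mul x := by
    obtain ⟨n, g, rfl⟩ := exists_rep G₀ x
    rw [← mk_one G₀ n, mk_mul, one_mul]
  mul_one x := by
    obtain ⟨n, g, rfl⟩ := exists_rep G₀ x
    rw [← mk_one G₀ n, mk_mul, mul_one]
  inv_mul_cancel x := by
    obtain ⟨n, g, rfl⟩ := exists_rep G₀ x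
    rw [inv_def, mk_mul, inv_mul_cancel, mk_one]

def iotaHom (n : ℕ) : XX G₀ n →* H G₀ where
  toFun := mk G₀ n
  map_one' := mk_one G₀ n
  map_mul' g h := (mk_mul G₀ n g h).symm


end Stmt7Aux


namespace Stmt7Aux
universe u
variable (G₀ : Type u) [Group G₀]

/-- the canonical fixed-point-free involution at stage `n+1`. -/
def tau (n : ℕ) : XX G₀ (n+1) :=
  (Equiv.prodCongr (Equiv.refl (XX G₀ n)) (⟨Bool.not, Bool.not, Bool.not_not, Bool.not_not⟩) :
    Equiv.Perm (XX G₀ n × Bool))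

lemma tau_apply (n : ℕ) (p : XX G₀ n × Bool) :
    asPerm G₀ (tau G₀ n) p = (p.1, !p.2) := rfl

lemma tau_fpf (n : ℕ) (p : XX G₀ n × Bool) : asPerm G₀ (tau G₀ n) p ≠ p := by
  rw [tau_apply]
  intro e
  have := congrArg Prod.snd e
  simp at this

lemma tau_invol (n : ℕ) (p : XX G₀ n × Bool) :
    asPerm G₀ (tau G₀ n) (asPerm G₀ (tau G₀ n) p) = p := by
  rw [tau_apply, tau_apply, Bool.not_not]

lemma tau_mul_self (n : ℕ) : tau G₀ n * tau G₀ n = 1 := by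
  apply Equiv.ext
  intro p
  exact tau_invol G₀ n p

lemma tau_ne_one (n : ℕ) : tau G₀ n ≠ 1 := by
  intro e
  have := congrArg (fun q => asPerm G₀ q ((1 : XX G₀ n), false)) e
  simp only [tau_apply] at this
  have := congrArg Prod.snd this
  simp [asPerm] at this
  exact Bool.false_ne_true this

/-- involutions at any stage become conjugate to `tau` one level up. -/
lemma key_conj (n : ℕ) (g : XX G₀ n) (hg2 : g * g = 1) (hg1 : g ≠ 1) :
    IsConj (tau G₀ n) (step G₀ n g) := by
  have h := fpf_isConj (Y := XX G₀ n × Bool)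
    (asPerm G₀ (tau G₀ n)) (asPerm G₀ (step G₀ n g))
    (tau_invol G₀ n) (tau_fpf G₀ n)
    (fun p => by
      rw [step_apply, step_apply]
      show ((g * (g * p.1), p.2) : XX G₀ n × Bool) = p
      rw [← mul_assoc, hg2, one_mul])
    (fun p => by
      rw [step_apply]
      intro e
      have e1 := congrArg Prod.fst e
      simp only at e1
      exact hg1 (by
        have : g * p.1 = 1 * p.1 := by rwa [one_mul]
        exact mul_right_cancel this))
  exact h

lemma mk_step (n : ℕ) (g : XX G₀ n) :
    mk G₀ (n+1) (step G₀ n g) = mk G₀ n g := by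
  rw [← tr_succ_self G₀ (Nat.le_succ n) g, mk_tr]

/-- the distinguished involution class: all the `tau`s are conjugate in `H`. -/
lemma tau_chain (n : ℕ) : IsConj (mk G₀ 1 (tau G₀ 0)) (mk G₀ (n+1) (tau G₀ n)) := by
  induction n with
  | zero => exact IsConj.refl _
  | succ n ih =>
      have h1 : IsConj (tau G₀ (n+1)) (step G₀ (n+1) (tau G₀ n)) :=
        key_conj G₀ (n+1) (tau G₀ n) (tau_mul_self G₀ n) (tau_ne_one G₀ n)
      have h2 := (iotaHom G₀ (n+2)).map_isConj h1
      have h3 : mk G₀ (n+2) (step G₀ (n+1) (tau G₀ n)) = mk G₀ (n+1) (tau G₀ n) :=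
        mk_step G₀ (n+1) (tau G₀ n)
      have h4 : IsConj (mk G₀ (n+2) (tau G₀ (n+1))) (mk G₀ (n+1) (tau G₀ n)) := h3 ▸ h2
      exact ih.trans h4.symm

lemma mk_eq_one_iff {n : ℕ} {g : XX G₀ n} : mk G₀ n g = 1 ↔ g = 1 := by
  constructor
  · intro e
    rw [← mk_one G₀ n] at e
    exact mk_inj G₀ e
  · rintro rfl
    exact mk_one G₀ n

def f0 : G₀ →* H G₀ := iotaHom G₀ 0

lemma f0_inj : Function.Injective (f0 G₀) := fun a b e => mk_inj G₀ e

end Stmt7Aux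


open Stmt7Aux in
/-- Any group `G₀` embeds into a group `H` containing an involution `t` such
that every involution of `H` is conjugate to `t` and `t` acts without fixed
points in the right regular action of `H` on itself. -/
theorem stmt_7 {G₀ : Type u} [Group G₀] :
    ∃ (H : Type u) (_ : Group H) (f : G₀ →* H),
      Function.Injective f ∧
      ∃ t : H, t ≠ 1 ∧ t ^ 2 = 1 ∧
        (∀ s : H, s ≠ 1 → s ^ 2 = 1 → IsConj t s) ∧
        (∀ x : H, x * t ≠ x) := by
  refine ⟨Stmt7Aux.H G₀, inferInstance, f0 G₀, f0_inj G₀,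
    Stmt7Aux.mk G₀ 1 (tau G₀ 0), ?_, ?_, ?_, ?_⟩
  · intro e
    exact tau_ne_one G₀ 0 ((mk_eq_one_iff G₀).1 e)
  · rw [sq, Stmt7Aux.mk_mul, tau_mul_self, mk_one]
  · intro s hs1 hs2
    obtain ⟨n, g, rfl⟩ := exists_rep G₀ s
    have hg2 : g * g = 1 := by
      rw [sq, Stmt7Aux.mk_mul] at hs2
      exact (mk_eq_one_iff G₀).1 hs2
    have hg1 : g ≠ 1 := fun e => hs1 (by rw [e]; exact mk_one G₀ n)
    have h1 := key_conj G₀ n g hg2 hg1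
    have h2 : IsConj (Stmt7Aux.mk G₀ (n+1) (tau G₀ n))
        (Stmt7Aux.mk G₀ (n+1) (step G₀ n g)) :=
      (iotaHom G₀ (n+1)).map_isConj h1
    have h3 : Stmt7Aux.mk G₀ (n+1) (step G₀ n g) = Stmt7Aux.mk G₀ n g :=
      mk_step G₀ n g
    exact (tau_chain G₀ n).trans (h3 ▸ h2)
  · intro x e
    have e2 : x * Stmt7Aux.mk G₀ 1 (tau G₀ 0) = x * 1 := by rw [mul_one]; exact e
    exact tau_ne_one G₀ 0 ((mk_eq_one_iff G₀).1 (mul_left_cancel e2))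
end

section
/- A nontrivial free product G = A ∗ B with A ≠ 1 and |B| ≥ 2 and (|A| ≥ 3 or |B| ≥ 3) contains no nontrivial abelian normal subgroup. -/
open Monoid List

namespace FPAux

variable {ι : Type*} {G : ι → Type*} [∀ i, Group (G i)]

def P (l : List (Σ i, G i)) : Monoid.CoprodI G :=
  (l.map fun x => Monoid.CoprodI.of x.2).prod

def Red (l : List (Σ i, G i)) : Prop :=
  (∀ x ∈ l, x.2 ≠ 1) ∧ l.Chain' (fun x y => x.1 ≠ y.1)

@[simp] lemma P_nil : P ([] : List (Σ i, G i)) = 1 := rfl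
@[simp] lemma P_cons (x : Σ i, G i) (l) : P (x :: l) = CoprodI.of x.2 * P l := by simp [P]
@[simp] lemma P_append (l₁ l₂ : List (Σ i, G i)) : P (l₁ ++ l₂) = P l₁ * P l₂ := by simp [P]
@[simp] lemma P_singleton (x : Σ i, G i) : P [x] = CoprodI.of x.2 := by simp [P]

lemma red_nil : Red ([] : List (Σ i, G i)) := ⟨by simp, isChain_nil⟩

def toWord (l : List (Σ i, G i)) (h : Red l) : CoprodI.Word G := ⟨l, h.1, h.2⟩

lemma P_inj {l₁ l₂ : List (Σ i, G i)} (h₁ : Red l₁) (h₂ : Red l₂) (h : P l₁ = P l₂) :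
    l₁ = l₂ := by
  classical
  have hw : toWord l₁ h₁ = toWord l₂ h₂ := by
    have hp : (toWord l₁ h₁).prod = (toWord l₂ h₂).prod := h
    exact (CoprodI.Word.equiv (M := G)).symm.injective hp
  exact congrArg CoprodI.Word.toList hw

lemma exists_red (g : CoprodI G) : ∃ l, Red l ∧ P l = g := by
  classical
  refine ⟨(CoprodI.Word.equiv (M := G) g).toList,
    ⟨(CoprodI.Word.equiv (M := G) g).ne_one, (CoprodI.Word.equiv (M := G) g).chain_ne⟩, ?_⟩
  exact (CoprodI.Word.equiv (M := G)).symm_apply_apply g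

lemma P_ne_one {l : List (Σ i, G i)} (h : Red l) (hne : l ≠ []) : P l ≠ 1 := by
  intro h1
  exact hne (P_inj h red_nil h1)

lemma red_cons_iff {x : Σ i, G i} {l : List (Σ i, G i)} :
    Red (x :: l) ↔ x.2 ≠ 1 ∧ (∀ y ∈ l.head?, x.1 ≠ y.1) ∧ Red l := by
  constructor
  · rintro ⟨h1, h2⟩
    exact ⟨h1 _ mem_cons_self, (isChain_cons.1 h2).1,
      fun y hy => h1 y (mem_cons_of_mem _ hy), (isChain_cons.1 h2).2⟩
  · rintro ⟨h1, h2, h3, h4⟩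
    refine ⟨?_, isChain_cons.2 ⟨h2, h4⟩⟩
    rintro y hy
    rcases mem_cons.1 hy with rfl | hy
    · exact h1
    · exact h3 y hy

/-- multiply a single nontrivial letter on the left of a reduced list -/
lemma letter_mul (i : ι) (c : G i) (hc : c ≠ 1) {s : List (Σ i, G i)} (hs : Red s) :
    ∃ t, Red t ∧ P t = CoprodI.of c * P s ∧ t.length ≤ s.length + 1 := by
  match s with
  | [] => exact ⟨[⟨i, c⟩], red_cons_iff.2 ⟨hc, by simp, red_nil⟩, by simp, by simp⟩
  | ⟨j, d⟩ :: s' =>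
    obtain ⟨hd, hhead, hs'⟩ := red_cons_iff.1 hs
    by_cases hij : i = j
    · subst hij
      by_cases h1 : c * d = 1
      · refine ⟨s', hs', ?_, by simp; omega⟩
        rw [P_cons, ← mul_assoc, ← map_mul, h1, map_one, one_mul]
      · refine ⟨⟨i, c * d⟩ :: s', red_cons_iff.2 ⟨h1, hhead, hs'⟩, ?_, by simp⟩
        rw [P_cons, P_cons, ← mul_assoc, ← map_mul]
    · exact ⟨⟨i, c⟩ :: ⟨j, d⟩ :: s', red_cons_iff.2 ⟨hc, by simpa using hij, hs⟩,
        by rw [P_cons], by simp⟩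

lemma mul_red_le {l : List (Σ i, G i)} (hl : Red l) :
    ∀ {r : List (Σ i, G i)}, Red r →
      ∃ s, Red s ∧ P s = P l * P r ∧ s.length ≤ l.length + r.length := by
  induction l with
  | nil => exact fun {r} hr => ⟨r, hr, by simp, by simp⟩
  | cons x l' ih =>
    intro r hr
    obtain ⟨hx, _, hl'⟩ := red_cons_iff.1 hl
    obtain ⟨s', hs', hPs', hlen'⟩ := ih hl' hr
    obtain ⟨t, ht, hPt, hlent⟩ := letter_mul x.1 x.2 hx hs'
    refine ⟨t, ht, ?_, by simp at *; omega⟩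
    rw [hPt, hPs', P_cons, mul_assoc]

/-- inverse of a reduced list -/
def linv (l : List (Σ i, G i)) : List (Σ i, G i) :=
  (l.map fun p => ⟨p.1, p.2⁻¹⟩).reverse

@[simp] lemma linv_length (l : List (Σ i, G i)) : (linv l).length = l.length := by
  simp [linv]

lemma red_linv {l : List (Σ i, G i)} (hl : Red l) : Red (linv l) := by
  obtain ⟨h1, h2⟩ := hl
  constructor
  · intro x hx
    simp only [linv, mem_reverse, mem_map] at hx
    obtain ⟨p, hp, rfl⟩ := hx
    simpa using h1 p hp
  · show List.IsChain _ _
    rw [linv, isChain_reverse, isChain_map]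
    exact h2.imp fun {a b} h => Ne.symm h

lemma P_linv (l : List (Σ i, G i)) : P (linv l) = (P l)⁻¹ := by
  induction l with
  | nil => simp [linv]
  | cons x l ih =>
    have : linv (x :: l) = linv l ++ [⟨x.1, x.2⁻¹⟩] := by simp [linv]
    rw [this, P_append, P_singleton, P_cons, ih, map_inv, mul_inv_rev]

lemma red_append_iff {l₁ l₂ : List (Σ i, G i)} :
    Red (l₁ ++ l₂) ↔ Red l₁ ∧ Red l₂ ∧ ∀ x ∈ l₁.getLast?, ∀ y ∈ l₂.head?, x.1 ≠ y.1 := by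
  constructor
  · rintro ⟨h1, h2⟩
    replace h2 := isChain_append.1 h2
    exact ⟨⟨fun x hx => h1 x (mem_append_left _ hx), h2.1⟩,
      ⟨fun x hx => h1 x (mem_append_right _ hx), h2.2.1⟩, h2.2.2⟩
  · rintro ⟨⟨h1, h2⟩, ⟨h3, h4⟩, h5⟩
    refine ⟨fun x hx => ?_, isChain_append.2 ⟨h2, h4, h5⟩⟩
    rcases mem_append.1 hx with hx | hx
    · exact h1 x hx
    · exact h3 x hx

section StepOne
variable {G : Bool → Type*} [∀ b, Group (G b)]

lemma stepone_aux (N : Subgroup (CoprodI G)) (hN : N.Normal)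
    (htriv : ∀ b : Bool, ∃ t : G b, t ≠ 1) :
    ∀ n (l : List (Σ b, G b)), l.length ≤ n → Red l → P l ∈ N → l ≠ [] →
    ∃ (m : List (Σ b, G b)) (x y : Σ b, G b),
      Red m ∧ m.head? = some x ∧ m.getLast? = some y ∧ x.1 ≠ y.1 ∧ P m ∈ N := by
  intro n
  induction n with
  | zero =>
    intro l hlen _ _ hne
    exact absurd (List.length_eq_zero_iff.1 (Nat.le_zero.1 hlen)) hne
  | succ n ih =>
    intro l hlen hl hmem hne
    match l with
    | [] => exact absurd rfl hne
    | [x] =>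
      obtain ⟨t, ht⟩ := htriv (!x.1)
      have hx : x.2 ≠ 1 := hl.1 _ (by simp)
      refine ⟨[⟨!x.1, t⟩, x, ⟨!x.1, t⁻¹⟩, ⟨x.1, x.2⁻¹⟩], ⟨!x.1, t⟩, ⟨x.1, x.2⁻¹⟩,
        ?_, rfl, by simp, by simp, ?_⟩
      · refine ⟨?_, ?_⟩
        · rintro y hy
          simp only [mem_cons, not_mem_nil, or_false] at hy
          rcases hy with rfl | rfl | rfl | rfl
          · exact ht
          · exact hx
          · exact inv_ne_one.2 ht
          · exact inv_ne_one.2 hx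
        · refine isChain_cons_cons.2 ⟨by simp, isChain_cons_cons.2 ⟨by simp, isChain_cons_cons.2 ⟨by simp, isChain_singleton _⟩⟩⟩
      · have : P [⟨!x.1, t⟩, x, ⟨!x.1, t⁻¹⟩, ⟨x.1, x.2⁻¹⟩]
            = (CoprodI.of t) * P [x] * (CoprodI.of t)⁻¹ * (P [x])⁻¹ := by
          simp [P, map_inv, mul_assoc]
        rw [this]
        exact mul_mem (hN.conj_mem _ hmem _) (inv_mem hmem)
    | x :: y :: rest =>
      have hl₂ne : (y :: rest : List (Σ b, G b)) ≠ [] := by simp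
      set l₂ : List (Σ b, G b) := y :: rest with hl₂def
      obtain ⟨xi, xv⟩ := x
      have hz : l₂.getLast? = some (l₂.getLast hl₂ne) := getLast?_eq_getLast _
      set z := l₂.getLast hl₂ne with hzdef
      by_cases hxz : xi = z.1
      · -- conjugate to shorten / fix
        obtain ⟨zi, zv⟩ := z
        dsimp at hxz
        subst hxz
        have hsplit : l₂.dropLast ++ [(⟨xi, zv⟩ : Σ b, G b)] = l₂ := by
          rw [hzdef]; exact dropLast_append_getLast hl₂ne
        set l₂' := l₂.dropLast with hl₂'def
        have hxv : xv ≠ 1 := hl.1 ⟨xi, xv⟩ (by simp)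
        have hredl₂ : Red l₂ := (red_cons_iff.1 hl).2.2
        have hredsplit : Red (l₂' ++ [(⟨xi, zv⟩ : Σ b, G b)]) := by rw [hsplit]; exact hredl₂
        have hg' : P l₂ * CoprodI.of xv ∈ N := by
          have : P l₂ * CoprodI.of xv
              = (CoprodI.of xv)⁻¹ * P (⟨xi, xv⟩ :: l₂) * ((CoprodI.of xv)⁻¹)⁻¹ := by
            conv_rhs => rw [P_cons]
            rw [inv_inv, inv_mul_cancel_left]
          rw [this]
          exact hN.conj_mem _ hmem _
        have hPl₂ : P l₂ = P l₂' * CoprodI.of zv := by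
          rw [← hsplit, P_append, P_singleton]
        have hl₂'ne : l₂' ≠ [] := by
          intro hemp
          have h2 : l₂ = [⟨xi, zv⟩] := by rw [← hsplit, hemp, nil_append]
          have := (red_cons_iff.1 hl).2.1
          rw [h2] at this
          exact this _ rfl rfl
        by_cases h1 : zv * xv = 1
        · -- shorter word, recurse
          have hP : P l₂' = P l₂ * CoprodI.of xv := by
            rw [hPl₂, mul_assoc, ← map_mul, h1, map_one, mul_one]
          refine ih l₂' ?_ (red_append_iff.1 hredsplit).1 (hP ▸ hg') hl₂'ne
          have : l₂'.length + 1 = l₂.length := by rw [← hsplit]; simp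
          simp only [hl₂def, length_cons] at *
          omega
        · -- done: head of l₂' vs new last letter
          obtain ⟨hr1, hr2, hr3⟩ := red_append_iff.1 hredsplit
          refine ⟨l₂' ++ [⟨xi, zv * xv⟩], l₂'.head hl₂'ne, ⟨xi, zv * xv⟩, ?_, ?_, ?_, ?_, ?_⟩
          · refine red_append_iff.2 ⟨hr1, ⟨by rintro w hw; simp at hw; subst hw; exact h1, isChain_singleton _⟩, ?_⟩
            simpa using hr3
          · rw [head?_append_of_ne_nil _ hl₂'ne, head?_eq_head hl₂'ne]
          · exact getLast?_concat
          · have hhead : l₂.head? = some y := rfl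
            have hxy : xi ≠ y.1 := (red_cons_iff.1 hl).2.1 y hhead
            have hy : l₂'.head hl₂'ne = y := by
              have h5 := head?_append_of_ne_nil l₂' (l₂ := [(⟨xi, zv⟩ : Σ b, G b)]) hl₂'ne
              rw [hsplit, hhead, head?_eq_head hl₂'ne] at h5
              exact (Option.some_injective _ h5).symm
            show (l₂'.head hl₂'ne).1 ≠ xi
            rw [hy]
            exact Ne.symm hxy
          · have : P (l₂' ++ [(⟨xi, zv * xv⟩ : Σ b, G b)]) = P l₂ * CoprodI.of xv := by
              rw [P_append, P_singleton, hPl₂, map_mul, mul_assoc]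
            rw [this]
            exact hg'
      · -- already good
        exact ⟨⟨xi, xv⟩ :: l₂, ⟨xi, xv⟩, z, hl, rfl, by rw [hl₂def, getLast?_cons_cons, ← hl₂def, hz], hxz, hmem⟩

end StepOne

section StepTwo
variable {G : Bool → Type*} [∀ b, Group (G b)]

lemma steptwo (N : Subgroup (CoprodI G)) (hN : N.Normal)
    (hcomm : ∀ a ∈ N, ∀ b ∈ N, a * b = b * a)
    (i : Bool) (x₁ : G i) (l₂ : List (Σ b, G b)) (hl₂ne : l₂ ≠ [])
    (hred : Red (⟨i, x₁⟩ :: l₂))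
    (hlast : ∀ p ∈ l₂.getLast?, p.1 ≠ i)
    (hmem : P (⟨i, x₁⟩ :: l₂) ∈ N)
    (a : G i) (ha1 : a ≠ 1) (hax : a ≠ x₁) : False := by
  obtain ⟨hx₁, hhead', hredl₂⟩ := red_cons_iff.1 hred
  have hhead : ∀ p ∈ l₂.head?, p.1 ≠ i := fun p hp => Ne.symm (hhead' p hp)
  set g := P (⟨i, x₁⟩ :: l₂) with hg
  have hu : CoprodI.of a * g * (CoprodI.of a)⁻¹ ∈ N := hN.conj_mem _ hmem _
  have hcommug : (CoprodI.of a * g * (CoprodI.of a)⁻¹) * g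
      = g * (CoprodI.of a * g * (CoprodI.of a)⁻¹) := hcomm _ hu _ hmem
  have hax' : a⁻¹ * x₁ ≠ 1 := fun h => hax (by
    have := inv_eq_of_mul_eq_one_right h
    rw [inv_inv] at this; rw [← this])
  -- helper : cons a nontrivial letter of index i onto l₂
  have hconsl₂ : ∀ c : G i, c ≠ 1 → Red (⟨i, c⟩ :: l₂) := fun c hc =>
    red_cons_iff.2 ⟨hc, fun p hp => hhead' p hp, hredl₂⟩
  rcases eq_or_ne (a * x₁) 1 with ha2 | ha2
  · -- Case B : a = x₁⁻¹
    have hinva : a⁻¹ = x₁ := inv_eq_of_mul_eq_one_right ha2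
    have hx2 : x₁ * x₁ ≠ 1 := by
      intro h
      exact hax ((inv_eq_of_mul_eq_one_left ha2).symm.trans (inv_eq_of_mul_eq_one_right h))
    have hu' : CoprodI.of a * g * (CoprodI.of a)⁻¹ = P l₂ * CoprodI.of x₁ := by
      have h1 : CoprodI.of a * g = P l₂ := by
        rw [hg, P_cons, ← mul_assoc, ← map_mul, ha2, map_one, one_mul]
      rw [h1, ← map_inv, hinva]
    -- L = reduced word of u * g
    have hredL : Red (l₂ ++ ⟨i, x₁ * x₁⟩ :: l₂) :=
      red_append_iff.2 ⟨hredl₂, hconsl₂ _ hx2, fun p hp q hq => by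
        simp only [head?_cons, Option.mem_some_iff] at hq
        subst hq; exact hlast p hp⟩
    have hPL : P (l₂ ++ ⟨i, x₁ * x₁⟩ :: l₂) = g * (CoprodI.of a * g * (CoprodI.of a)⁻¹) := by
      rw [← hcommug, hu', P_append, P_cons, hg, P_cons, map_mul]
      simp [mul_assoc]
    -- decompositions of l₂
    have hsplit0 : l₂.dropLast ++ [l₂.getLast hl₂ne] = l₂ := dropLast_append_getLast hl₂ne
    have hcons0 : l₂.head hl₂ne :: l₂.tail = l₂ := cons_head_tail hl₂ne
    obtain ⟨wi, wv, hw⟩ : ∃ wi wv, l₂.getLast hl₂ne = ⟨wi, wv⟩ := ⟨_, _, rfl⟩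
    obtain ⟨vi, vv, hv⟩ : ∃ vi vv, l₂.head hl₂ne = ⟨vi, vv⟩ := ⟨_, _, rfl⟩
    have hwlast : l₂.getLast? = some ⟨wi, wv⟩ := by rw [getLast?_eq_getLast hl₂ne, hw]
    have hvhead : l₂.head? = some ⟨vi, vv⟩ := by rw [head?_eq_head hl₂ne, hv]
    have hwi : wi ≠ i := hlast _ hwlast
    have hvi : vi ≠ i := hhead _ hvhead
    have hwvi : wi = vi := by
      have : ∀ x y z : Bool, x ≠ z → y ≠ z → x = y := by decide
      exact this _ _ _ hwi hvi
    subst hwvi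
    rw [hw] at hsplit0
    rw [hv] at hcons0
    set l₂' := l₂.dropLast with hl₂'def
    set l₂'' := l₂.tail with hl₂''def
    have hredsplit : Red (l₂' ++ [(⟨wi, wv⟩ : Σ b, G b)]) := by rw [hsplit0]; exact hredl₂
    have hredcons : Red ((⟨wi, vv⟩ : Σ b, G b) :: l₂'') := by rw [hcons0]; exact hredl₂
    obtain ⟨hredl₂', _, hjun'⟩ := red_append_iff.1 hredsplit
    obtain ⟨hvv1, hheadl₂'', hredl₂''⟩ := red_cons_iff.1 hredcons
    have hPl₂w : P l₂ = P l₂' * CoprodI.of wv := by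
      rw [← hsplit0, P_append, P_singleton]
    have hPl₂v : P l₂ = CoprodI.of vv * P l₂'' := by
      rw [← hcons0, P_cons]
    have hlenl₂' : l₂'.length + 1 = l₂.length := by
      have := congrArg List.length hsplit0; simpa using this
    have hlenl₂'' : l₂''.length + 1 = l₂.length := by
      have := congrArg List.length hcons0; simpa using this
    -- head of l₂' facts
    have hheadl₂' : ∀ p ∈ l₂'.head?, p.1 ≠ i := by
      intro p hp
      exact hhead p (by rw [← hsplit0]; exact mem_head?_append_of_mem_head? hp)
    have hlastl₂'' : ∀ p ∈ l₂''.getLast?, p.1 ≠ i := by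
      intro p hp
      apply hlast p
      rw [← hcons0]
      exact mem_getLast?_append_of_mem_getLast? (l₁ := [⟨wi, vv⟩]) hp
    rcases eq_or_ne (wv * vv) 1 with h2 | h2
    · -- cancellation in the middle : use length bound
      have hX : Red ((⟨i, x₁⟩ : Σ b, G b) :: l₂') :=
        red_cons_iff.2 ⟨hx₁, fun p hp => Ne.symm (hheadl₂' p hp), hredl₂'⟩
      have hY : Red (l₂'' ++ [(⟨i, x₁⟩ : Σ b, G b)]) :=
        red_append_iff.2 ⟨hredl₂'', red_cons_iff.2 ⟨hx₁, by simp, red_nil⟩,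
          fun p hp q hq => by
            simp only [head?_cons, Option.mem_some_iff] at hq
            subst hq; exact hlastl₂'' p hp⟩
      obtain ⟨s, hs, hPs, hslen⟩ := mul_red_le hX hY
      have hcan : ∀ X : CoprodI G, CoprodI.of wv * (CoprodI.of vv * X) = X := fun X => by
        rw [← mul_assoc, ← map_mul, h2, map_one, one_mul]
      have hPs' : P s = P (l₂ ++ ⟨i, x₁ * x₁⟩ :: l₂) := by
        rw [hPs, hPL, hu', hg, P_cons, P_cons, P_append, P_singleton]
        nth_rewrite 1 [hPl₂w]
        nth_rewrite 1 [hPl₂v]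
        simp only [mul_assoc, hcan]
      have := congrArg List.length (P_inj hs hredL hPs')
      simp only [length_append, length_cons, length_nil, length_singleton] at this hslen
      omega
    · -- no cancellation : compare heads
      have hredD : Red (l₂' ++ (⟨wi, wv * vv⟩ : Σ b, G b) :: l₂'') := by
        refine red_append_iff.2 ⟨hredl₂', red_cons_iff.2 ⟨h2, hheadl₂'', hredl₂''⟩, ?_⟩
        intro p hp q hq
        simp only [head?_cons, Option.mem_some_iff] at hq
        subst hq
        exact hjun' p hp ⟨wi, wv⟩ rfl
      have hheadD : ∀ p ∈ (l₂' ++ (⟨wi, wv * vv⟩ : Σ b, G b) :: l₂'').head?, p.1 ≠ i := by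
        intro p hp
        rcases eq_or_ne l₂' [] with hnil | hnil
        · rw [hnil, nil_append, head?_cons, Option.mem_some_iff] at hp
          subst hp; exact hwi
        · rw [head?_append_of_ne_nil _ hnil] at hp
          exact hheadl₂' p hp
      have hlastD : ∀ p ∈ (l₂' ++ (⟨wi, wv * vv⟩ : Σ b, G b) :: l₂'').getLast?, p.1 ≠ i := by
        intro p hp
        rw [getLast?_append_cons] at hp
        rcases eq_or_ne l₂'' [] with hnil | hnil
        · rw [hnil, getLast?_singleton, Option.mem_some_iff] at hp
          subst hp; exact hwi
        · rw [show ((⟨wi, wv * vv⟩ : Σ b, G b) :: l₂'') = [⟨wi, wv * vv⟩] ++ l₂'' from rfl,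
            getLast?_append_of_ne_nil _ hnil] at hp
          exact hlastl₂'' p hp
      have hredM : Red ((⟨i, x₁⟩ : Σ b, G b) ::
          ((l₂' ++ (⟨wi, wv * vv⟩ : Σ b, G b) :: l₂'') ++ [(⟨i, x₁⟩ : Σ b, G b)])) := by
        refine red_cons_iff.2 ⟨hx₁, ?_, red_append_iff.2 ⟨hredD,
          red_cons_iff.2 ⟨hx₁, by simp, red_nil⟩, fun p hp q hq => by
            simp only [head?_cons, Option.mem_some_iff] at hq
            subst hq; exact hlastD p hp⟩⟩
        intro p hp
        have hDne : l₂' ++ (⟨wi, wv * vv⟩ : Σ b, G b) :: l₂'' ≠ [] := by simp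
        rw [head?_append_of_ne_nil _ hDne] at hp
        exact Ne.symm (hheadD p hp)
      have hPM : P ((⟨i, x₁⟩ : Σ b, G b) ::
          ((l₂' ++ (⟨wi, wv * vv⟩ : Σ b, G b) :: l₂'') ++ [(⟨i, x₁⟩ : Σ b, G b)]))
          = P (l₂ ++ ⟨i, x₁ * x₁⟩ :: l₂) := by
        rw [hPL, hu', hg, P_cons, P_cons, P_append, P_append, P_cons,
          P_singleton, map_mul]
        nth_rewrite 2 [hPl₂v]
        nth_rewrite 1 [hPl₂w]
        simp only [mul_assoc]
      have heq := P_inj hredM hredL hPM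
      have := congrArg List.head? heq
      rw [head?_cons, head?_append_of_ne_nil _ hl₂ne, hvhead] at this
      have := congrArg Sigma.fst (Option.some_injective _ this)
      exact hvi this.symm
  · -- Case A : no cancellation, compare lengths
    have hredL1 : Red ((⟨i, a * x₁⟩ : Σ b, G b) :: (l₂ ++ (⟨i, a⁻¹ * x₁⟩ : Σ b, G b) :: l₂)) := by
      refine red_cons_iff.2 ⟨ha2, ?_, red_append_iff.2 ⟨hredl₂, hconsl₂ _ hax', fun p hp q hq => by
        simp only [head?_cons, Option.mem_some_iff] at hq
        subst hq; exact hlast p hp⟩⟩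
      intro p hp
      rw [head?_append_of_ne_nil _ hl₂ne] at hp
      exact hhead' p hp
    have hredL2 : Red ((⟨i, x₁⟩ : Σ b, G b) ::
        (l₂ ++ (⟨i, a * x₁⟩ : Σ b, G b) :: (l₂ ++ [(⟨i, a⁻¹⟩ : Σ b, G b)]))) := by
      refine red_cons_iff.2 ⟨hx₁, ?_, red_append_iff.2 ⟨hredl₂, ?_, fun p hp q hq => by
        simp only [head?_cons, Option.mem_some_iff] at hq
        subst hq; exact hlast p hp⟩⟩
      · intro p hp
        rw [head?_append_of_ne_nil _ hl₂ne] at hp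
        exact hhead' p hp
      · refine red_cons_iff.2 ⟨ha2, ?_, red_append_iff.2 ⟨hredl₂,
          red_cons_iff.2 ⟨inv_ne_one.2 ha1, by simp, red_nil⟩, fun p hp q hq => by
            simp only [head?_cons, Option.mem_some_iff] at hq
            subst hq; exact hlast p hp⟩⟩
        intro p hp
        rw [head?_append_of_ne_nil _ hl₂ne] at hp
        exact hhead' p hp
    have e1 : P ((⟨i, a * x₁⟩ : Σ b, G b) :: (l₂ ++ (⟨i, a⁻¹ * x₁⟩ : Σ b, G b) :: l₂))
        = (CoprodI.of a * g * (CoprodI.of a)⁻¹) * g := by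
      rw [hg]
      simp only [P_cons, P_append, map_mul, map_inv]
      simp [mul_assoc]
    have e2 : P ((⟨i, x₁⟩ : Σ b, G b) ::
        (l₂ ++ (⟨i, a * x₁⟩ : Σ b, G b) :: (l₂ ++ [(⟨i, a⁻¹⟩ : Σ b, G b)])))
        = g * (CoprodI.of a * g * (CoprodI.of a)⁻¹) := by
      rw [hg]
      simp only [P_cons, P_append, P_singleton, map_mul, map_inv]
      simp [mul_assoc]
    have := congrArg List.length (P_inj hredL1 hredL2 (by rw [e1, e2, hcommug]))
    simp only [length_cons, length_append] at this
    omega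

end StepTwo


section Main
variable {G : Bool → Type*} [∀ b, Group (G b)]

lemma linv_head? (l : List (Σ b, G b)) :
    (linv l).head? = l.getLast?.map fun p => (⟨p.1, p.2⁻¹⟩ : Σ b, G b) := by
  rw [linv, head?_reverse, getLast?_eq_head?_reverse, ← map_reverse, head?_map, head?_reverse]

lemma linv_getLast? (l : List (Σ b, G b)) :
    (linv l).getLast? = l.head?.map fun p => (⟨p.1, p.2⁻¹⟩ : Σ b, G b) := by
  rw [linv, getLast?_reverse, head?_map]

lemma main_coprodI
    (htriv : ∀ b : Bool, ∃ t : G b, t ≠ 1)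
    (hbig : ∃ (b : Bool) (x y z : G b), x ≠ y ∧ x ≠ z ∧ y ≠ z)
    (N : Subgroup (Monoid.CoprodI G)) (hN : N.Normal)
    (hcomm : ∀ a ∈ N, ∀ b ∈ N, a * b = b * a) : N = ⊥ := by
  rw [Subgroup.eq_bot_iff_forall]
  by_contra hbot
  push_neg at hbot
  obtain ⟨g, hgN, hg1⟩ := hbot
  obtain ⟨l, hl, hPl⟩ := exists_red g
  have hlne : l ≠ [] := by
    rintro rfl
    exact hg1 (by rw [← hPl]; rfl)
  obtain ⟨m, x, y, hm, hmhead, hmlast, hxy, hmN⟩ :=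
    stepone_aux N hN htriv l.length l le_rfl hl (hPl ▸ hgN) hlne
  obtain ⟨b, b₁, b₂, b₃, hb12, hb13, hb23⟩ := hbig
  have key : ∀ (m₀ : List (Σ b', G b')) (x₀ y₀ : Σ b', G b'), Red m₀ →
      m₀.head? = some x₀ → m₀.getLast? = some y₀ → x₀.1 = b → y₀.1 ≠ b →
      P m₀ ∈ N → False := by
    intro m₀ x₀ y₀ hm₀ hh₀ hl₀ hx₀ hy₀ hm₀N
    match m₀, hh₀ with
    | x₀ :: tail, rfl =>
    obtain ⟨xi, xv⟩ := x₀
    subst hx₀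
    have htne : tail ≠ [] := by
      rintro rfl
      simp only [getLast?_singleton, Option.some_inj] at hl₀
      exact hy₀ (by rw [← hl₀])
    have hlasttail : ∀ p ∈ tail.getLast?, p.1 ≠ xi := by
      intro p hp
      have : (⟨xi, xv⟩ :: tail : List (Σ b', G b')).getLast? = tail.getLast? := by
        rw [show ((⟨xi, xv⟩ : Σ b', G b') :: tail) = [⟨xi, xv⟩] ++ tail from rfl,
          getLast?_append_of_ne_nil _ htne]
      rw [← this, hl₀, Option.mem_some_iff] at hp
      rw [← hp]
      exact hy₀
    have ha : ∃ a : G xi, a ≠ 1 ∧ a ≠ xv := by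
      have h3 : ∀ u v : G xi, u ≠ 1 → v ≠ 1 → u ≠ v → ∃ a : G xi, a ≠ 1 ∧ a ≠ xv := by
        intro u v hu hv huv
        rcases eq_or_ne u xv with rfl | h
        · exact ⟨v, hv, fun hh => huv hh.symm⟩
        · exact ⟨u, hu, h⟩
      rcases eq_or_ne b₁ 1 with rfl | h1
      · exact h3 b₂ b₃ (Ne.symm hb12) (Ne.symm hb13) hb23
      · rcases eq_or_ne b₂ 1 with rfl | h2
        · exact h3 b₁ b₃ h1 (Ne.symm hb23) hb13
        · exact h3 b₁ b₂ h1 h2 hb12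
    obtain ⟨a, ha1, hax⟩ := ha
    exact steptwo N hN hcomm xi xv tail htne hm₀ hlasttail hm₀N a ha1 hax
  rcases eq_or_ne x.1 b with hxb | hxb
  · have hyb : y.1 ≠ b := fun h => hxy (hxb.trans h.symm)
    exact key m x y hm hmhead hmlast hxb hyb hmN
  · have hyb : y.1 = b := by
      have hbool : ∀ p q r : Bool, p ≠ q → p ≠ r → q = r := by decide
      exact hbool x.1 y.1 b hxy hxb
    refine key (linv m) ⟨y.1, y.2⁻¹⟩ ⟨x.1, x.2⁻¹⟩ (red_linv hm) ?_ ?_ hyb hxb ?_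
    · rw [linv_head?, hmlast, Option.map_some]
    · rw [linv_getLast?, hmhead, Option.map_some]
    · rw [P_linv]
      exact inv_mem hmN

end Main
end FPAux

universe u₉ v₉ in
theorem stmt_9_aux {A : Type u₉} {B : Type v₉} [Group A] [Group B]
    (hA : ∃ a : A, a ≠ 1) (hB : ∃ b : B, b ≠ 1)
    (hbig : (∃ x y z : A, x ≠ y ∧ x ≠ z ∧ y ≠ z) ∨
            (∃ x y z : B, x ≠ y ∧ x ≠ z ∧ y ≠ z)) :
    ∀ N : Subgroup (Monoid.Coprod A B), N.Normal →
      (∀ a ∈ N, ∀ b ∈ N, a * b = b * a) → N = ⊥ := by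
  intro N hN hcomm
  classical
  letI G : Bool → Type (max u₉ v₉) := fun b => cond b (ULift.{v₉} A) (ULift.{u₉} B)
  letI instG : ∀ b, Group (G b) := fun b =>
    Bool.rec (motive := fun b => Group (G b))
      (ULift.group : Group (ULift.{u₉} B)) (ULift.group : Group (ULift.{v₉} A)) b
  letI φ : Monoid.Coprod A B →* Monoid.CoprodI G :=
    Monoid.Coprod.lift
      ((Monoid.CoprodI.of (M := G) (i := true)).comp
        (MulEquiv.ulift.symm : A ≃* ULift A).toMonoidHom)
      ((Monoid.CoprodI.of (M := G) (i := false)).comp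
        (MulEquiv.ulift.symm : B ≃* ULift B).toMonoidHom)
  letI ψ : Monoid.CoprodI G →* Monoid.Coprod A B :=
    Monoid.CoprodI.lift (fun b => Bool.rec (motive := fun b => G b →* Monoid.Coprod A B)
      ((Monoid.Coprod.inr (M := A)).comp (MulEquiv.ulift (α := B)).toMonoidHom)
      ((Monoid.Coprod.inl (N := B)).comp (MulEquiv.ulift (α := A)).toMonoidHom) b)
  have hψφ : ∀ x, ψ (φ x) = x := by
    intro x
    have : ψ.comp φ = MonoidHom.id _ := by
      apply Monoid.Coprod.hom_ext
      · ext a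
        simp only [φ, ψ, MonoidHom.coe_comp, Function.comp_apply, MonoidHom.id_apply,
          Monoid.Coprod.lift_apply_inl, Monoid.CoprodI.lift_of]
        rfl
      · ext b
        simp only [φ, ψ, MonoidHom.coe_comp, Function.comp_apply, MonoidHom.id_apply,
          Monoid.Coprod.lift_apply_inr, Monoid.CoprodI.lift_of]
        rfl
    exact DFunLike.congr_fun this x
  have hφψ : ∀ x, φ (ψ x) = x := by
    intro x
    have : φ.comp ψ = MonoidHom.id _ := by
      apply Monoid.CoprodI.ext_hom
      intro i
      cases i
      · ext b
        simp only [φ, ψ, MonoidHom.coe_comp, Function.comp_apply, MonoidHom.id_apply,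
          Monoid.Coprod.lift_apply_inr, Monoid.CoprodI.lift_of]
        rfl
      · ext a
        simp only [φ, ψ, MonoidHom.coe_comp, Function.comp_apply, MonoidHom.id_apply,
          Monoid.Coprod.lift_apply_inl, Monoid.CoprodI.lift_of]
        rfl
    exact DFunLike.congr_fun this x
  have hinj : Function.Injective φ := fun a b h => by
    rw [← hψφ a, ← hψφ b, h]
  have hsurj : Function.Surjective φ := fun y => ⟨ψ y, hφψ y⟩
  have htriv : ∀ b : Bool, ∃ t : G b, t ≠ 1 := by
    intro b
    cases b
    · obtain ⟨t, ht⟩ := hB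
      exact ⟨ULift.up t, fun h => ht (congrArg ULift.down h)⟩
    · obtain ⟨t, ht⟩ := hA
      exact ⟨ULift.up t, fun h => ht (congrArg ULift.down h)⟩
  have hbig' : ∃ (b : Bool) (x y z : G b), x ≠ y ∧ x ≠ z ∧ y ≠ z := by
    rcases hbig with ⟨x, y, z, h1, h2, h3⟩ | ⟨x, y, z, h1, h2, h3⟩
    · exact ⟨true, ULift.up x, ULift.up y, ULift.up z,
        fun h => h1 (congrArg ULift.down h), fun h => h2 (congrArg ULift.down h),
        fun h => h3 (congrArg ULift.down h)⟩
    · exact ⟨false, ULift.up x, ULift.up y, ULift.up z,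
        fun h => h1 (congrArg ULift.down h), fun h => h2 (congrArg ULift.down h),
        fun h => h3 (congrArg ULift.down h)⟩
  have hcomm' : ∀ a ∈ N.map φ, ∀ b ∈ N.map φ, a * b = b * a := by
    intro a ha b hb
    obtain ⟨a₀, ha₀, rfl⟩ := Subgroup.mem_map.1 ha
    obtain ⟨b₀, hb₀, rfl⟩ := Subgroup.mem_map.1 hb
    rw [← map_mul, ← map_mul, hcomm a₀ ha₀ b₀ hb₀]
  have hbot := FPAux.main_coprodI htriv hbig' (N.map φ) (hN.map φ hsurj) hcomm'
  exact (Subgroup.map_eq_bot_iff_of_injective N hinj).1 hbot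


/-- A nontrivial free product `A ∗ B` with `A ≠ 1`, `|B| ≥ 2` and
(`|A| ≥ 3` or `|B| ≥ 3`) contains no nontrivial abelian normal subgroup. -/
theorem stmt_9 {A B : Type*} [Group A] [Group B]
    (hA : ∃ a : A, a ≠ 1) (hB : ∃ b : B, b ≠ 1)
    (hbig : (∃ x y z : A, x ≠ y ∧ x ≠ z ∧ y ≠ z) ∨
            (∃ x y z : B, x ≠ y ∧ x ≠ z ∧ y ≠ z)) :
    ∀ N : Subgroup (Monoid.Coprod A B), N.Normal →
      (∀ a ∈ N, ∀ b ∈ N, a * b = b * a) → N = ⊥ :=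
  stmt_9_aux hA hB hbig
end

section
/- In the free product with amalgamation G = G₀ ∗_{⟨t⟩} (⟨t⟩ × F(S)), every element commuting with t lies in the centralizer generated by the centralizer of t in G₀ together with F(S); in particular t is not central in G if t is not central in G₀. -/
open Monoid

/-- The family of the two factors of the amalgam `G₀ ∗_⟨t⟩ (⟨t⟩ × F(S))`. -/
def Fam (G₀ S : Type u) [Group G₀] (t : G₀) : Bool → Type u
  | true => G₀
  | false => (Subgroup.zpowers t) × FreeGroup S

instance famGroup (G₀ S : Type u) [Group G₀] (t : G₀) :
    ∀ i : Bool, Group (Fam G₀ S t i)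
  | true => inferInstanceAs (Group G₀)
  | false => inferInstanceAs (Group ((Subgroup.zpowers t) × FreeGroup S))

/-- The embeddings of the amalgamated subgroup `⟨t⟩` into the two factors. -/
def phi (G₀ S : Type u) [Group G₀] (t : G₀) :
    ∀ i : Bool, ↥(Subgroup.zpowers t) →* Fam G₀ S t i
  | true => (Subgroup.zpowers t).subtype
  | false => MonoidHom.inl (Subgroup.zpowers t) (FreeGroup S)

namespace StmtAux

open Monoid.PushoutI Monoid.PushoutI.NormalWord Subgroup

variable {G₀ S : Type u} [Group G₀] {t : G₀}

/-- The generator of the amalgamated subgroup as an element of `⟨t⟩`. -/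
abbrev tau (t : G₀) : ↥(Subgroup.zpowers t) := ⟨t, Subgroup.mem_zpowers t⟩

theorem phi_inj : ∀ i, Function.Injective (phi G₀ S t i)
  | true => Subgroup.subtype_injective _
  | false => fun a b h => by exact congrArg Prod.fst h

theorem h_cases (ht2 : t ^ 2 = 1) (h : ↥(Subgroup.zpowers t)) : h = 1 ∨ h = tau t := by
  obtain ⟨x, hx⟩ := h
  obtain ⟨k, rfl⟩ := Subgroup.mem_zpowers_iff.mp hx
  have h2 : t ^ (2 : ℤ) = 1 := by
    rw [show (2:ℤ) = ((2:ℕ):ℤ) by norm_num, zpow_natCast, ht2]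
  rcases Int.even_or_odd k with ⟨m, rfl⟩ | ⟨m, rfl⟩
  · left
    ext
    show t ^ (m + m) = 1
    rw [← two_mul, zpow_mul, h2, one_zpow]
  · right
    ext
    show t ^ (2 * m + 1) = t
    rw [zpow_add, zpow_mul, h2, one_zpow, zpow_one, one_mul]

/-- Product of a list of letters in the pushout. -/
def P : List ((i : Bool) × Fam G₀ S t i) → PushoutI (phi G₀ S t)
  | [] => 1
  | ⟨i, g⟩ :: L => PushoutI.of (φ := phi G₀ S t) i g * P L

/-- The rewriting function: push a `base (tau t)` from the right of a word through to
the left. -/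
noncomputable def rwl (d : Transversal (phi G₀ S t)) :
    List ((i : Bool) × Fam G₀ S t i) →
      ↥(Subgroup.zpowers t) × List ((i : Bool) × Fam G₀ S t i)
  | [] => (tau t, [])
  | ⟨i, g⟩ :: L =>
    let p := rwl d L
    let n := (d.compl i).equiv (g * phi G₀ S t i p.1)
    ((MonoidHom.ofInjective (d.injective i)).symm n.1,
      ⟨i, (n.2 : Fam G₀ S t i)⟩ :: p.2)

theorem rwl_nil (d : Transversal (phi G₀ S t)) : rwl d [] = (tau t, []) := rfl

theorem rwl_cons (d : Transversal (phi G₀ S t)) (i : Bool) (g : Fam G₀ S t i)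
    (L : List ((i : Bool) × Fam G₀ S t i)) :
    rwl d (⟨i, g⟩ :: L) =
      ((MonoidHom.ofInjective (d.injective i)).symm
          ((d.compl i).equiv (g * phi G₀ S t i (rwl d L).1)).1,
        ⟨i, (((d.compl i).equiv (g * phi G₀ S t i (rwl d L).1)).2 : Fam G₀ S t i)⟩
          :: (rwl d L).2) := rfl

theorem P_rwl (d : Transversal (phi G₀ S t)) (L : List ((i : Bool) × Fam G₀ S t i)) :
    P L * PushoutI.base (phi G₀ S t) (tau t) =
      PushoutI.base (phi G₀ S t) ((rwl d L).1) * P ((rwl d L).2) := by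
  induction L with
  | nil => simp [P, rwl_nil]
  | cons a L ih =>
    obtain ⟨i, g⟩ := a
    rw [rwl_cons]
    have hx := (d.compl i).equiv_fst_mul_equiv_snd (g * phi G₀ S t i (rwl d L).1)
    show PushoutI.of (φ := phi G₀ S t) i g * P L * _ =
      PushoutI.base (phi G₀ S t) ((MonoidHom.ofInjective (d.injective i)).symm
          ((d.compl i).equiv (g * phi G₀ S t i (rwl d L).1)).1) *
        (PushoutI.of (φ := phi G₀ S t) i
          ((((d.compl i).equiv (g * phi G₀ S t i (rwl d L).1)).2 : _) : Fam G₀ S t i) *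
          P ((rwl d L).2))
    conv_rhs => rw [← of_apply_eq_base (phi G₀ S t) i, MonoidHom.apply_ofInjective_symm,
      ← mul_assoc, ← map_mul, hx, map_mul, of_apply_eq_base, mul_assoc]
    rw [← ih, ← mul_assoc]

theorem rwl_fst_map (d : Transversal (phi G₀ S t))
    (L : List ((i : Bool) × Fam G₀ S t i)) :
    ((rwl d L).2).map Sigma.fst = L.map Sigma.fst := by
  induction L with
  | nil => rfl
  | cons a L ih =>
    obtain ⟨i, g⟩ := a
    rw [rwl_cons]
    simpa using ih

theorem not_in_range (d : Transversal (phi G₀ S t)) {i : Bool} {x : Fam G₀ S t i}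
    (hset : x ∈ d.set i) (hx : x ≠ 1) : x ∉ (phi G₀ S t i).range := by
  intro hrange
  apply hx
  have h1 := (d.compl i).equiv_snd_eq_self_of_mem_of_one_mem
    (Subgroup.one_mem _) hset
  have h2 := ((d.compl i).coe_equiv_snd_eq_one_iff_mem (d.one_mem i)).2 hrange
  rw [h1] at h2
  exact h2

theorem rwl_letters (d : Transversal (phi G₀ S t))
    (L : List ((i : Bool) × Fam G₀ S t i))
    (hL : ∀ l ∈ L, l.2 ∈ d.set l.1 ∧ l.2 ∉ (phi G₀ S t l.1).range) :
    ∀ l ∈ (rwl d L).2, l.2 ∈ d.set l.1 ∧ l.2 ∉ (phi G₀ S t l.1).range := by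
  induction L with
  | nil => intro l hl; simp [rwl_nil] at hl
  | cons a L ih =>
    obtain ⟨i, g⟩ := a
    rw [rwl_cons]
    intro l hl
    rcases List.mem_cons.mp hl with rfl | hl
    · constructor
      · exact (((d.compl i).equiv (g * phi G₀ S t i (rwl d L).1)).2).2
      · intro hrange
        have hg := (hL ⟨i, g⟩ List.mem_cons_self).2
        apply hg
        have := ((d.compl i).equiv_fst_mul_equiv_snd (g * phi G₀ S t i (rwl d L).1))
        have hfst : (((d.compl i).equiv (g * phi G₀ S t i (rwl d L).1)).1 : Fam G₀ S t i)
            ∈ (phi G₀ S t i).range :=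
          (((d.compl i).equiv (g * phi G₀ S t i (rwl d L).1)).1).2
        have hx : g * phi G₀ S t i (rwl d L).1 ∈ (phi G₀ S t i).range :=
          this ▸ mul_mem hfst hrange
        have : g = (g * phi G₀ S t i (rwl d L).1) * (phi G₀ S t i (rwl d L).1)⁻¹ := by
          group
        rw [this]
        exact mul_mem hx (inv_mem ⟨(rwl d L).1, rfl⟩)
    · exact ih (fun l hl => hL l (List.mem_cons_of_mem _ hl)) l hl

end StmtAux

namespace StmtAux

variable {G₀ S : Type u} [Group G₀] {t : G₀}

open Monoid Monoid.PushoutI Monoid.PushoutI.NormalWord Subgroup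

theorem P_eq (L : List ((i : Bool) × Fam G₀ S t i)) :
    PushoutI.ofCoprodI (φ := phi G₀ S t) (L.map fun l => CoprodI.of l.snd).prod = P L := by
  induction L with
  | nil => simp [P]
  | cons a L ih =>
    obtain ⟨i, g⟩ := a
    rw [List.map_cons, List.prod_cons, map_mul, PushoutI.ofCoprodI_of, ih]
    rfl

end StmtAux


/-- In `G = G₀ ∗_⟨t⟩ (⟨t⟩ × F(S))`, every element commuting with `t` lies in
the subgroup generated by the centralizer of `t` in `G₀` together with `F(S)`;
in particular `t` is not central in `G` if it is not central in `G₀`. -/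
theorem stmt_14 {G₀ : Type u} [Group G₀] (t : G₀) (ht1 : t ≠ 1)
    (ht2 : t ^ 2 = 1) (S : Type u) :
    (∀ g : PushoutI (phi G₀ S t),
      g * PushoutI.of (φ := phi G₀ S t) true t =
        PushoutI.of (φ := phi G₀ S t) true t * g →
      g ∈ Subgroup.closure
        ((PushoutI.of (φ := phi G₀ S t) true '' {g₀ : G₀ | g₀ * t = t * g₀}) ∪
         (Set.range fun s : S =>
            PushoutI.of (φ := phi G₀ S t) false (1, FreeGroup.of s)))) ∧
    ((∃ g₀ : G₀, g₀ * t ≠ t * g₀) →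
      ∃ g : PushoutI (phi G₀ S t),
        g * PushoutI.of (φ := phi G₀ S t) true t ≠
          PushoutI.of (φ := phi G₀ S t) true t * g) := by
  classical
  constructor
  · intro g hg
    set K := Subgroup.closure
        ((PushoutI.of (φ := phi G₀ S t) true '' {g₀ : G₀ | g₀ * t = t * g₀}) ∪
         (Set.range fun s : S =>
            PushoutI.of (φ := phi G₀ S t) false (1, FreeGroup.of s))) with hKdef
    set T := PushoutI.base (phi G₀ S t) (StmtAux.tau t) with hTdef
    have htau2 : StmtAux.tau t * StmtAux.tau t = 1 := Subtype.ext (by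
      show t * t = 1
      rw [← pow_two, ht2])
    have hoT : PushoutI.of (φ := phi G₀ S t) true t = T :=
      PushoutI.of_apply_eq_base (phi G₀ S t) true (StmtAux.tau t)
    have hKT : T ∈ K := by
      rw [← hoT]
      exact Subgroup.subset_closure (Or.inl ⟨t, rfl, rfl⟩)
    have hKbase : ∀ h : ↥(Subgroup.zpowers t), PushoutI.base (phi G₀ S t) h ∈ K := by
      intro h
      rcases StmtAux.h_cases ht2 h with rfl | rfl
      · rw [map_one]; exact one_mem K
      · exact hKT
    have hKfree : ∀ w : FreeGroup S,
        PushoutI.of (φ := phi G₀ S t) false (1, w) ∈ K := by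
      intro w
      induction w using FreeGroup.induction_on with
      | C1 =>
        rw [show PushoutI.of (φ := phi G₀ S t) false (1, (1 : FreeGroup S)) = 1 from
          map_one (PushoutI.of (φ := phi G₀ S t) false)]
        exact one_mem K
      | of s => exact Subgroup.subset_closure (Or.inr ⟨s, rfl⟩)
      | inv_of s hs =>
        have hmk : ((1, (FreeGroup.of s)⁻¹) : ↥(Subgroup.zpowers t) × FreeGroup S) =
            ((1, FreeGroup.of s) : ↥(Subgroup.zpowers t) × FreeGroup S)⁻¹ := by
          rw [Prod.inv_mk, inv_one]
        show PushoutI.of (φ := phi G₀ S t) false (1, (FreeGroup.of s)⁻¹) ∈ K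
        rw [hmk]
        exact (congrArg (· ∈ K) (map_inv (PushoutI.of (φ := phi G₀ S t) false)
          ((1, FreeGroup.of s) : ↥(Subgroup.zpowers t) × FreeGroup S))).mpr (inv_mem hs)
      | mul x y hx hy =>
        rw [show ((1, x * y) : ↥(Subgroup.zpowers t) × FreeGroup S) =
          ((1, x) : ↥(Subgroup.zpowers t) × FreeGroup S) * (1, y) by
            rw [Prod.mk_mul_mk, one_mul]]
        exact (congrArg (· ∈ K) (map_mul (PushoutI.of (φ := phi G₀ S t) false)
          ((1, x) : ↥(Subgroup.zpowers t) × FreeGroup S) (1, y))).mpr (mul_mem hx hy)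
    have hKfalse : ∀ x : ↥(Subgroup.zpowers t) × FreeGroup S,
        PushoutI.of (φ := phi G₀ S t) false x ∈ K := by
      intro x
      rw [show x = ((x.1, 1) : ↥(Subgroup.zpowers t) × FreeGroup S) * (1, x.2) by
        rw [Prod.mk_mul_mk, mul_one, one_mul]]
      refine (congrArg (· ∈ K) (map_mul (PushoutI.of (φ := phi G₀ S t) false)
        ((x.1, 1) : ↥(Subgroup.zpowers t) × FreeGroup S) (1, x.2))).mpr ?_
      refine mul_mem ?_ (hKfree x.2)
      rw [show ((x.1, (1 : FreeGroup S)) : ↥(Subgroup.zpowers t) × FreeGroup S) =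
        phi G₀ S t false x.1 from rfl]
      exact (congrArg (· ∈ K) (PushoutI.of_apply_eq_base (phi G₀ S t) false x.1)).mpr
        (hKbase x.1)
    have hKtrue : ∀ g₀ : G₀, g₀ * t = t * g₀ →
        PushoutI.of (φ := phi G₀ S t) true g₀ ∈ K :=
      fun g₀ h => Subgroup.subset_closure (Or.inl ⟨g₀, h, rfl⟩)
    obtain ⟨d⟩ := Monoid.PushoutI.NormalWord.transversal_nonempty (phi G₀ S t) StmtAux.phi_inj
    -- the membership induction
    have hMem : ∀ L : List ((i : Bool) × Fam G₀ S t i),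
        StmtAux.rwl d L = (StmtAux.tau t, L) → StmtAux.P L ∈ K := by
      intro L
      induction L with
      | nil => intro _; exact one_mem K
      | cons a L ih =>
        obtain ⟨i, g⟩ := a
        rw [StmtAux.rwl_cons, Prod.mk.injEq, List.cons.injEq]
        rintro ⟨h1, h21, h22⟩
        have hg2 : (((d.compl i).equiv (g * phi G₀ S t i (StmtAux.rwl d L).1)).2 :
            Fam G₀ S t i) = g :=
          eq_of_heq (Sigma.mk.inj_iff.mp h21).2
        have hfst : (((d.compl i).equiv (g * phi G₀ S t i (StmtAux.rwl d L).1)).1 :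
            Fam G₀ S t i) = phi G₀ S t i (StmtAux.tau t) := by
          rw [← h1, MonoidHom.apply_ofInjective_symm]
        have hx := (d.compl i).equiv_fst_mul_equiv_snd (g * phi G₀ S t i (StmtAux.rwl d L).1)
        rw [hfst, hg2] at hx
        rcases StmtAux.h_cases ht2 (StmtAux.rwl d L).1 with hcase | hcase
        · exfalso
          rw [hcase, map_one, mul_one] at hx
          have h1' : phi G₀ S t i (StmtAux.tau t) = 1 := mul_eq_right.mp hx
          have : StmtAux.tau t = (1 : ↥(Subgroup.zpowers t)) :=
            StmtAux.phi_inj i (by rw [h1', map_one])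
          exact ht1 (congrArg Subtype.val this)
        · rw [hcase] at hx
          have hletter : PushoutI.of (φ := phi G₀ S t) i g ∈ K := by
            cases i with
            | true => exact hKtrue g hx.symm
            | false => exact hKfalse g
          have hrec : StmtAux.rwl d L = (StmtAux.tau t, L) := by
            rw [show StmtAux.rwl d L = ((StmtAux.rwl d L).1, (StmtAux.rwl d L).2) from rfl,
              hcase, h22]
          exact mul_mem hletter (ih hrec)
    -- setup the normal word of `g`
    set W := Monoid.PushoutI.NormalWord.equiv (d := d) g with hWdef
    have hWprod : W.prod = g := (Monoid.PushoutI.NormalWord.equiv (d := d)).symm_apply_apply g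
    have hgW : g = PushoutI.base (phi G₀ S t) W.head * StmtAux.P W.toList := by
      conv_lhs => rw [← hWprod]
      show PushoutI.base (phi G₀ S t) W.head *
        PushoutI.ofCoprodI (φ := phi G₀ S t)
          ((W.toList.map fun l => CoprodI.of l.snd).prod) = _
      rw [StmtAux.P_eq]
    have hlet : ∀ l ∈ W.toList, l.2 ∈ d.set l.1 ∧ l.2 ∉ (phi G₀ S t l.1).range := by
      intro l hl
      obtain ⟨i, x⟩ := l
      have hset := W.normalized i x hl
      exact ⟨hset, StmtAux.not_in_range d hset (W.toWord.ne_one ⟨i, x⟩ hl)⟩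
    have hrl := StmtAux.rwl_letters d W.toList hlet
    have hrf := StmtAux.rwl_fst_map d W.toList
    -- the normal word for `T * g * T`
    let W' : Monoid.PushoutI.NormalWord d :=
      { toList := (StmtAux.rwl d W.toList).2
        ne_one := fun l hl h1 => (hrl l hl).2 (h1 ▸ one_mem _)
        chain_ne := by
          have h1 : ((W.toList.map Sigma.fst).Chain' Ne) :=
            (List.isChain_map _).mpr W.toWord.chain_ne
          rw [← hrf] at h1
          exact (List.isChain_map _).mp h1
        head := StmtAux.tau t * W.head * (StmtAux.rwl d W.toList).1
        normalized := fun i x hx => (hrl ⟨i, x⟩ hx).1 }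
    have hTT : T * T = 1 := by
      rw [hTdef, ← map_mul, htau2, map_one]
    have hg' : g * T = T * g := by rw [← hoT]; exact hg
    have hW'prod : W'.prod = W.prod := by
      have e1 : W'.prod =
          PushoutI.base (phi G₀ S t) (StmtAux.tau t * W.head * (StmtAux.rwl d W.toList).1) *
            StmtAux.P ((StmtAux.rwl d W.toList).2) := by
        show PushoutI.base (phi G₀ S t) _ *
          PushoutI.ofCoprodI (φ := phi G₀ S t)
            (((StmtAux.rwl d W.toList).2.map fun l => CoprodI.of l.snd).prod) = _
        rw [StmtAux.P_eq]
      rw [e1, map_mul, map_mul, mul_assoc, mul_assoc, ← StmtAux.P_rwl d W.toList,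
        hWprod, ← mul_assoc, ← mul_assoc, ← hTdef]
      calc T * PushoutI.base (phi G₀ S t) W.head * StmtAux.P W.toList * T
          = T * (PushoutI.base (phi G₀ S t) W.head * StmtAux.P W.toList) * T := by
            rw [mul_assoc T]
        _ = T * g * T := by rw [← hgW]
        _ = T * (T * g) := by rw [mul_assoc, hg']
        _ = g := by rw [← mul_assoc, hTT, one_mul]
    have hWW : W' = W := Monoid.PushoutI.NormalWord.prod_injective hW'prod
    have hhead : StmtAux.tau t * W.head * (StmtAux.rwl d W.toList).1 = W.head :=
      congrArg (fun w : Monoid.PushoutI.NormalWord d => w.head) hWW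
    have hlist : (StmtAux.rwl d W.toList).2 = W.toList :=
      congrArg (fun w : Monoid.PushoutI.NormalWord d => w.toList) hWW
    have hh₀ : (StmtAux.rwl d W.toList).1 = StmtAux.tau t := by
      rcases StmtAux.h_cases ht2 W.head with hc | hc <;> rw [hc] at hhead
      · rw [mul_one] at hhead
        have h2 : (StmtAux.rwl d W.toList).1 = (StmtAux.tau t)⁻¹ :=
          eq_inv_of_mul_eq_one_right hhead
        rw [h2, inv_eq_of_mul_eq_one_right htau2]
      · rw [htau2, one_mul] at hhead
        exact hhead
    rw [hgW]
    refine mul_mem (hKbase W.head) (hMem W.toList ?_)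
    rw [show StmtAux.rwl d W.toList =
      ((StmtAux.rwl d W.toList).1, (StmtAux.rwl d W.toList).2) from rfl, hh₀, hlist]
  · rintro ⟨g₀, hg₀⟩
    refine ⟨PushoutI.of (φ := phi G₀ S t) true g₀, fun hEq => hg₀ ?_⟩
    have hEq' := (map_mul (PushoutI.of (φ := phi G₀ S t) true) g₀ t).trans
      (hEq.trans (map_mul (PushoutI.of (φ := phi G₀ S t) true) t g₀).symm)
    exact Monoid.PushoutI.of_injective StmtAux.phi_inj true hEq'
end
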